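/- For i ≥ j ≥ 1, in the rewrite system on {a,b,ā,b̄}: (ba)^i (bā)^j →* (ba)^{i-j} b^{2j}, and b^{2j}(ab)^{i-j} is the reversal of (ba)^{i-j} b^{2j}. -/
import Mathlib


/-- The four-letter alphabet `{a, b, ā, b̄}`; `A` stands for `ā` and `B` for `b̄`. -/
inductive L : Type
  | a | b | A | B
deriving DecidableEq

/-- The antiparallel letter: `a ↔ ā`, `b ↔ b̄`. -/
def bar : L → L
  | .a => .A
  | .A => .a
  | .b => .B
  | .B => .b

/-- Letterwise application of the involution `a ↔ ā`, `b ↔ b̄` to a word. -/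
def barw (w : List L) : List L := w.map bar

/-- The eight rewrite rules of the Sub Rosa system:
`ab→ba`, `bā→āb`, `āb̄→b̄ā`, `b̄a→ab̄`, `aā→ε`, `āa→ε`, `bb̄→ε`, `b̄b→ε`. -/
def Rule : List L → List L → Prop := fun x y =>
  (x = [.a, .b] ∧ y = [.b, .a]) ∨ (x = [.b, .A] ∧ y = [.A, .b]) ∨
  (x = [.A, .B] ∧ y = [.B, .A]) ∨ (x = [.B, .a] ∧ y = [.a, .B]) ∨
  (x = [.a, .A] ∧ y = []) ∨ (x = [.A, .a] ∧ y = []) ∨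
  (x = [.b, .B] ∧ y = []) ∨ (x = [.B, .b] ∧ y = [])

/-- One rewrite step: replace a factor matching the left side of a rule by its right side. -/
def Step (u v : List L) : Prop :=
  ∃ p s x y, Rule x y ∧ u = p ++ x ++ s ∧ v = p ++ y ++ s

/-- `u →* v`: the reflexive transitive closure of the rewrite step. -/
def Steps : List L → List L → Prop := Relation.ReflTransGen Step

/-- `rep w n` is the `n`-fold concatenation `w^n`. -/
def rep (w : List L) (n : ℕ) : List L := (List.replicate n w).flatten

/-- A matching on a word pairs each occurrence of a letter with an occurrence of its
antiparallel letter, bijectively (an involution without fixed points). -/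
structure Matching (w : List L) where
  m : Fin w.length → Fin w.length
  invol : ∀ i, m (m i) = i
  nofix : ∀ i, m i ≠ i
  compat : ∀ i, w.get (m i) = bar (w.get i)

/-- The 4-tuples of letters that are cyclic rotations of `(a, b, ā, b̄)`. -/
def Rot4 : L → L → L → L → Prop := fun x y z t =>
  (x = .a ∧ y = .b ∧ z = .A ∧ t = .B) ∨ (x = .b ∧ y = .A ∧ z = .B ∧ t = .a) ∨
  (x = .A ∧ y = .B ∧ z = .a ∧ t = .b) ∨ (x = .B ∧ y = .a ∧ z = .b ∧ t = .A)

/-- The crossing condition: whenever two matched pairs interleave (cross) in the cyclic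
word, the four letters read in positional order form a cyclic rotation of `a, b, ā, b̄`. -/
def CrossOK {w : List L} (M : Matching w) : Prop :=
  ∀ i j i' j' : Fin w.length, i < j → j < i' → i' < j' →
    M.m i = i' → M.m j = j' →
    Rot4 (w.get i) (w.get j) (w.get i') (w.get j')

/-- A word admits a matching satisfying the crossing condition. -/
def GoodWord (w : List L) : Prop := ∃ M : Matching w, CrossOK M

lemma rep_succ (w : List L) (n : ℕ) : rep w (n+1) = w ++ rep w n := by
  simp [rep, List.replicate_succ]

lemma rep_succ' (w : List L) (n : ℕ) : rep w (n+1) = rep w n ++ w := by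
  simp [rep, List.replicate_succ']

lemma rep_add (w : List L) (m n : ℕ) : rep w (m+n) = rep w m ++ rep w n := by
  unfold rep; rw [List.replicate_add, List.flatten_append]

lemma steps_congr (p s : List L) {u v : List L} (h : Steps u v) :
    Steps (p ++ u ++ s) (p ++ v ++ s) := by
  induction h with
  | refl => exact Relation.ReflTransGen.refl
  | tail _ hstep ih =>
    refine ih.tail ?_
    obtain ⟨p', s', x, y, hr, hu, hv⟩ := hstep
    exact ⟨p ++ p', s' ++ s, x, y, hr, by simp [hu], by simp [hv]⟩

lemma core1 : ∀ k, Steps ([L.a] ++ rep [L.b] k ++ [L.A]) (rep [L.b] k) := by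
  intro k
  induction k with
  | zero =>
    refine Relation.ReflTransGen.single ⟨[], [], [L.a, L.A], [], ?_, by simp [rep], by simp [rep]⟩
    unfold Rule; tauto
  | succ k ih =>
    have h1 : Step ([L.a] ++ rep [L.b] (k+1) ++ [L.A])
        (([L.a] ++ rep [L.b] k ++ [L.A]) ++ [L.b]) := by
      refine ⟨[L.a] ++ rep [L.b] k, [], [L.b, L.A], [L.A, L.b], ?_, ?_, ?_⟩
      · unfold Rule; tauto
      · simp [rep_succ']
      · simp
    have h2 := steps_congr [] [L.b] ih
    simp only [List.nil_append] at h2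
    refine (Relation.ReflTransGen.single h1).trans ?_
    have : rep [L.b] k ++ [L.b] = rep [L.b] (k+1) := (rep_succ' _ _).symm
    rw [← this]
    exact h2

lemma core2 : ∀ j t, Steps (rep [L.b, L.a] j ++ rep [L.b] (2*t) ++ rep [L.b, L.A] j)
    (rep [L.b] (2*(j+t))) := by
  intro j
  induction j with
  | zero => intro t; simp only [rep, Nat.zero_add, List.replicate_zero, List.flatten_nil, List.nil_append, List.append_nil]; exact Relation.ReflTransGen.refl
  | succ j ih =>
    intro t
    have e1 : rep [L.b, L.a] (j+1) ++ rep [L.b] (2*t) ++ rep [L.b, L.A] (j+1)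
        = (rep [L.b, L.a] j ++ [L.b]) ++ ([L.a] ++ rep [L.b] (2*t+1) ++ [L.A])
          ++ rep [L.b, L.A] j := by
      rw [rep_succ' [L.b, L.a], rep_succ [L.b, L.A], rep_succ' [L.b]]
      simp
    have h1 := steps_congr (rep [L.b, L.a] j ++ [L.b]) (rep [L.b, L.A] j) (core1 (2*t+1))
    rw [← e1] at h1
    have e2 : (rep [L.b, L.a] j ++ [L.b]) ++ rep [L.b] (2*t+1) ++ rep [L.b, L.A] j
        = rep [L.b, L.a] j ++ rep [L.b] (2*(t+1)) ++ rep [L.b, L.A] j := by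
      have : rep [L.b] (2*(t+1)) = [L.b] ++ rep [L.b] (2*t+1) := by
        have : 2*(t+1) = (2*t+1)+1 := by ring
        rw [this, rep_succ]
      rw [this]; simp
    rw [e2] at h1
    refine h1.trans ?_
    have := ih (t+1)
    have e3 : j + (t+1) = j + 1 + t := by ring
    rwa [e3] at this

lemma rev_ba (k : ℕ) : (rep [L.b, L.a] k).reverse = rep [L.a, L.b] k := by
  induction k with
  | zero => simp [rep]
  | succ k ih => rw [rep_succ, rep_succ']; simp [ih]

lemma rev_b (k : ℕ) : (rep [L.b] k).reverse = rep [L.b] k := by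
  simp [rep]

/-- Case `i ≥ j` of Lemma 3: `(ba)^i (bā)^j →* (ba)^{i-j} b^{2j}`, and
`b^{2j}(ab)^{i-j}` is the reversal of `(ba)^{i-j} b^{2j}`. -/
theorem subrosa_lemma3_ge (i j : ℕ) (hj : 1 ≤ j) (hij : j ≤ i) :
    Steps (rep [L.b, L.a] i ++ rep [L.b, L.A] j)
        (rep [L.b, L.a] (i - j) ++ rep [L.b] (2 * j)) ∧
    rep [L.b] (2 * j) ++ rep [L.a, L.b] (i - j) =
      (rep [L.b, L.a] (i - j) ++ rep [L.b] (2 * j)).reverse := by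
  constructor
  · have e1 : rep [L.b, L.a] i ++ rep [L.b, L.A] j
        = rep [L.b, L.a] (i-j) ++ (rep [L.b, L.a] j ++ rep [L.b] (2*0) ++ rep [L.b, L.A] j)
          ++ [] := by
      conv_lhs => rw [show i = (i-j)+j from (Nat.sub_add_cancel hij).symm]
      rw [rep_add]; simp [rep]
    rw [e1]
    have h := steps_congr (rep [L.b, L.a] (i-j)) [] (core2 j 0)
    simpa using h
  · rw [List.reverse_append, rev_ba, rev_b]
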